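/- Let H be a d×d real matrix with nonnegative off-diagonal entries and all row sums equal to 1, v its left eigenvector for the eigenvalue 1 with v·1' = 1, and H̃ := H − 1'v. Let w : (0, ∞) → ℝ^d (row vector valued) be continuous. Then the function Ŝ(t) := ∫₁ᵗ w(x)·(H̃/x)·(t/x)^{H̃} dx + w(t) − w(1)·t^{H̃} is continuous on (0, ∞), satisfies Ŝ(1) = 0, and is the unique continuous solution of equation (Equ2): Ŝ(t) = w(t) − w(1) + ∫₁ᵗ (Ŝ(x)·H̃)/x dx for all t > 0. -/

import Mathlib

open MeasureTheory ProbabilityTheory Filter Matrix Set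
open scoped Topology NNReal

noncomputable section

instance matrixMeasurableSpace {d : ℕ} : MeasurableSpace (Matrix (Fin d) (Fin d) ℝ) :=
  inferInstanceAs (MeasurableSpace (Fin d → Fin d → ℝ))

/-- Euclidean norm of a row vector in `Fin d → ℝ`. -/
def eNorm {d : ℕ} (x : Fin d → ℝ) : ℝ := Real.sqrt (∑ i, x i ^ 2)

/-- Operator norm of a `d × d` real matrix acting by right multiplication on row
vectors, induced by the Euclidean norm. -/
def opNorm {d : ℕ} (M : Matrix (Fin d) (Fin d) ℝ) : ℝ :=
  sSup ((fun x => eNorm (Matrix.vecMul x M)) '' {x : Fin d → ℝ | eNorm x = 1})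

/-- `t ^ M := exp (M · ln t)` for a square matrix `M`. -/
def mpow {d : ℕ} (M : Matrix (Fin d) (Fin d) ℝ) (t : ℝ) : Matrix (Fin d) (Fin d) ℝ :=
  NormedSpace.exp (Real.log t • M)

/-- `log x := ln (max e x)`. -/
def rlog (x : ℝ) : ℝ := Real.log (max (Real.exp 1) x)

/-- The `k`-th standard basis row vector of `ℝ^d`. -/
def bvec {d : ℕ} (k : Fin d) : Fin d → ℝ := fun j => if j = k then 1 else 0

/-- Entrywise integral of a matrix-valued function over a set. -/
def matInt {d : ℕ} (f : ℝ → Matrix (Fin d) (Fin d) ℝ) (s : Set ℝ) :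
    Matrix (Fin d) (Fin d) ℝ :=
  Matrix.of fun i j => ∫ x in s, f x i j

/-- The matrix `1'v` whose every row is the row vector `v`. -/
def onevMat {d : ℕ} (v : Fin d → ℝ) : Matrix (Fin d) (Fin d) ℝ :=
  Matrix.of fun _ j => v j

/-- `H̃ := H − 1'v`. -/
def Htilde {d : ℕ} (H : Matrix (Fin d) (Fin d) ℝ) (v : Fin d → ℝ) :
    Matrix (Fin d) (Fin d) ℝ :=
  H - onevMat v

/-- `Σ₁ := diag(v) − v'v`. -/
def Sigma1 {d : ℕ} (v : Fin d → ℝ) : Matrix (Fin d) (Fin d) ℝ :=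
  Matrix.of fun i j => (if i = j then v i else 0) - v i * v j

/-- `Σ₂ := Σ_q v_q V_q`. -/
def Sigma2 {d : ℕ} (v : Fin d → ℝ) (V : Fin d → Matrix (Fin d) (Fin d) ℝ) :
    Matrix (Fin d) (Fin d) ℝ :=
  ∑ q, v q • V q

/-- A `d`-dimensional Brownian motion with covariance matrix `Λ`: starts at `0`,
has a.s. continuous paths on `[0,∞)`, independent increments, and Gaussian
increments `W_t − W_s ~ N(0, (t−s)Λ)` (characterized through one-dimensional
projections). -/
structure IsBM {Ω : Type} [MeasurableSpace Ω] (μ : Measure Ω) {d : ℕ}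
    (Λ : Matrix (Fin d) (Fin d) ℝ) (W : ℝ → Ω → Fin d → ℝ) : Prop where
  meas : ∀ t : ℝ, Measurable (W t)
  start : ∀ᵐ ω ∂μ, W 0 ω = 0
  cont : ∀ᵐ ω ∂μ, ContinuousOn (fun t => W t ω) (Ici (0 : ℝ))
  indep : ∀ (n : ℕ) (t : Fin (n + 1) → ℝ), Monotone t → 0 ≤ t 0 →
    iIndepFun
      (fun i : Fin n => fun ω => W (t i.succ) ω - W (t i.castSucc) ω) μ
  gauss : ∀ s t : ℝ, 0 ≤ s → s ≤ t → ∀ u : Fin d → ℝ,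
    μ.map (fun ω => ∑ i, u i * (W t ω i - W s ω i)) =
      gaussianReal 0 (Real.toNNReal ((t - s) * (∑ i, ∑ j, u i * Λ i j * u j)))

/-- A standard one-dimensional Brownian motion. -/
structure IsBM1 {Ω : Type} [MeasurableSpace Ω] (μ : Measure Ω)
    (W : ℝ → Ω → ℝ) : Prop where
  meas : ∀ t : ℝ, Measurable (W t)
  start : ∀ᵐ ω ∂μ, W 0 ω = 0
  cont : ∀ᵐ ω ∂μ, ContinuousOn (fun t => W t ω) (Ici (0 : ℝ))
  indep : ∀ (n : ℕ) (t : Fin (n + 1) → ℝ), Monotone t → 0 ≤ t 0 →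
    iIndepFun
      (fun i : Fin n => fun ω => W (t i.succ) ω - W (t i.castSucc) ω) μ
  gauss : ∀ s t : ℝ, 0 ≤ s → s ≤ t →
    μ.map (fun ω => W t ω - W s ω) = gaussianReal 0 (Real.toNNReal (t - s))

/-- A centered Gaussian law on `ι → ℝ` with covariance matrix `Γ`, characterized
through one-dimensional projections. -/
def IsCenteredGaussianLaw {ι : Type} [Fintype ι] (ν : Measure (ι → ℝ))
    (Γ : Matrix ι ι ℝ) : Prop :=
  IsProbabilityMeasure ν ∧
    ∀ u : ι → ℝ, ν.map (fun x => ∑ i, u i * x i) =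
      gaussianReal 0 (Real.toNNReal (∑ i, ∑ j, u i * Γ i j * u j))

/-- Convergence in distribution (weak convergence of the laws), characterized by
bounded continuous test functions. -/
def TendstoInDistribution {Ω : Type} [MeasurableSpace Ω] (μ : Measure Ω)
    {E : Type} [MeasurableSpace E] [TopologicalSpace E]
    (Z : ℕ → Ω → E) (ν : Measure E) : Prop :=
  ∀ f : BoundedContinuousFunction E ℝ,
    Tendsto (fun n => ∫ ω, f (Z n ω) ∂μ) atTop (𝓝 (∫ x, f x ∂ν))

/-- The generalized Friedman urn model. -/
structure IsGFU {Ω : Type} {m0 : MeasurableSpace Ω} (μ : Measure Ω)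
    (ℱ : MeasureTheory.Filtration ℕ m0) {d : ℕ}
    (X : ℕ → Ω → Fin d → ℝ) (D : ℕ → Ω → Matrix (Fin d) (Fin d) ℝ)
    (Y : ℕ → Ω → Fin d → ℝ) : Prop where
  prob : IsProbabilityMeasure μ
  Y0_det : ∃ y0 : Fin d → ℝ, (∀ i, 0 < y0 i) ∧ ∀ ω, Y 0 ω = y0
  X_meas : ∀ m, 1 ≤ m → Measurable[ℱ m] (X m)
  D_meas : ∀ m, 1 ≤ m → Measurable[ℱ m] (D m)
  X_basis : ∀ m, 1 ≤ m → ∀ ω, ∃ k, X m ω = bvec k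
  draw : ∀ m, 1 ≤ m → ∀ k : Fin d,
    condExp (ℱ (m - 1)) μ ({ω | X m ω = bvec k}.indicator fun _ => (1 : ℝ))
      =ᵐ[μ] fun ω => Y (m - 1) ω k / ∑ j, Y (m - 1) ω j
  update : ∀ m, 1 ≤ m → ∀ ω, Y m ω = Y (m - 1) ω + Matrix.vecMul (X m ω) (D m ω)
  condIndep : ∀ m, 1 ≤ m → ∀ k : Fin d, ∀ φ : Matrix (Fin d) (Fin d) ℝ → ℝ,
    Measurable φ → (∀ A, |φ A| ≤ 1) →
    condExp (ℱ (m - 1)) μ (fun ω => ({ω' | X m ω' = bvec k}.indicator (fun _ => (1 : ℝ)) ω)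
        * φ (D m ω))
      =ᵐ[μ] fun ω =>
        (condExp (ℱ (m - 1)) μ ({ω' | X m ω' = bvec k}.indicator fun _ => (1 : ℝ)) ω)
          * (condExp (ℱ (m - 1)) μ (fun ω' => φ (D m ω')) ω)

/-- The (random) generating matrix `H_m = E[D_m | ℱ_{m−1}]`. -/
def genMat {Ω : Type} {m0 : MeasurableSpace Ω} (μ : Measure Ω)
    (ℱ : MeasureTheory.Filtration ℕ m0) {d : ℕ}
    (D : ℕ → Ω → Matrix (Fin d) (Fin d) ℝ) (m : ℕ) (ω : Ω) :
    Matrix (Fin d) (Fin d) ℝ :=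
  Matrix.of fun i j => condExp (ℱ (m - 1)) μ (fun ω' => D m ω' i j) ω

/-- The allocation counts `N_n = Σ_{m=1}^n X_m`. -/
def urnN {Ω : Type} {d : ℕ} (X : ℕ → Ω → Fin d → ℝ) (n : ℕ) (ω : Ω) : Fin d → ℝ :=
  ∑ m ∈ Finset.Icc 1 n, X m ω

/-- The total number of balls `a_n = Y_n · 1'`. -/
def urnTotal {Ω : Type} {d : ℕ} (Y : ℕ → Ω → Fin d → ℝ) (n : ℕ) (ω : Ω) : ℝ :=
  ∑ j, Y n ω j

/-- Assumption 1. -/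
structure Assump1 {Ω : Type} {m0 : MeasurableSpace Ω} (μ : Measure Ω)
    (ℱ : MeasureTheory.Filtration ℕ m0) {d : ℕ}
    (D : ℕ → Ω → Matrix (Fin d) (Fin d) ℝ)
    (H : Matrix (Fin d) (Fin d) ℝ) (τ : ℝ) : Prop where
  tau_nonneg : 0 ≤ τ
  offdiag_nonneg : ∀ q k, q ≠ k → 0 ≤ H q k
  rowsum_one : ∀ q, ∑ k, H q k = 1
  approx : ∀ᵐ ω ∂μ,
    (fun n : ℕ => ∑ m ∈ Finset.Icc 1 n, opNorm (genMat μ ℱ D m ω - H))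
      =o[atTop] fun n : ℕ => (n : ℝ) ^ ((1 : ℝ) / 2 - τ)

/-- The conditional covariance matrix of the `q`-th row of `D_n` given `ℱ_{n−1}`. -/
def condCov {Ω : Type} {m0 : MeasurableSpace Ω} (μ : Measure Ω)
    (ℱ : MeasureTheory.Filtration ℕ m0) {d : ℕ}
    (D : ℕ → Ω → Matrix (Fin d) (Fin d) ℝ) (n : ℕ) (q : Fin d) (ω : Ω) :
    Matrix (Fin d) (Fin d) ℝ :=
  Matrix.of fun k l =>
    condExp (ℱ (n - 1)) μ (fun ω' => D n ω' q k * D n ω' q l) ω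
      - (condExp (ℱ (n - 1)) μ (fun ω' => D n ω' q k) ω)
        * (condExp (ℱ (n - 1)) μ (fun ω' => D n ω' q l) ω)

/-- Assumption 2. -/
structure Assump2 {Ω : Type} {m0 : MeasurableSpace Ω} (μ : Measure Ω)
    (ℱ : MeasureTheory.Filtration ℕ m0) {d : ℕ}
    (D : ℕ → Ω → Matrix (Fin d) (Fin d) ℝ)
    (V : Fin d → Matrix (Fin d) (Fin d) ℝ) (ε : ℝ) : Prop where
  eps_pos : 0 < ε
  eps_lt : ε < 1 / 2
  moment : ∃ C : ℝ, ∀ n : ℕ, 1 ≤ n → ∫ ω, opNorm (D n ω) ^ (2 + ε) ∂μ ≤ C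
  V_psd : ∀ q, (V q).PosSemidef
  cov : ∀ q, ∀ᵐ ω ∂μ,
    (fun n : ℕ =>
        opNorm ((∑ m ∈ Finset.Icc 1 n, condCov μ ℱ D m q ω) - (n : ℝ) • V q))
      =o[atTop] fun n : ℕ => (n : ℝ) ^ (1 - ε)

/-- Jordan-form data for the generating matrix `H`, as in Assumption 1: an
invertible complex matrix `T` with first column `1'` conjugating `H` into
`diag(1, J_2, …, J_s)`, together with the quantities `ρ` and `ν`. -/
structure JordanData {d : ℕ} (H : Matrix (Fin d) (Fin d) ℝ) where
  hd : 0 < d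
  s : ℕ
  hs : 0 < s
  lam : Fin s → ℂ
  blk : Fin d → Fin s
  T : Matrix (Fin d) (Fin d) ℂ
  rho : ℝ
  nu : ℕ
  hT : IsUnit T.det
  hTcol : ∀ i, T i ⟨0, hd⟩ = 1
  hmono : Monotone blk
  hsurj : Function.Surjective blk
  hblk0 : ∀ i, blk i = ⟨0, hs⟩ → i = ⟨0, hd⟩
  hlam0 : lam ⟨0, hs⟩ = 1
  hJ : T⁻¹ * H.map (fun x => (x : ℂ)) * T = Matrix.of (fun i j =>
    if j = i then lam (blk i)
    else if (i : ℕ) + 1 = (j : ℕ) ∧ blk i = blk j then 1 else 0)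
  hrho : IsGreatest {x : ℝ | ∃ t, t ≠ ⟨0, hs⟩ ∧ x = (lam t).re} rho
  hnu : IsGreatest {k : ℕ | ∃ t, t ≠ ⟨0, hs⟩ ∧ (lam t).re = rho ∧
    k = (Finset.univ.filter fun i => blk i = t).card} nu

/-!
Variation of constants. Since `t ↦ t^A` solves `X' = X A / t`, one can rewrite
`Ŝ(t) = (∫₁ᵗ w(x) (A/x) x^{-A} dx − w(1)) t^A + w(t)`; the product rule shows that `Ŝ − w` has
derivative `Ŝ(t) A / t`, and integrating from `1` gives (Equ2). The difference `D` of two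
continuous solutions satisfies `D' = D A / t` and `D(1) = 0`, so `D(t) t^{-A}` is constant, hence
zero.
-/

section MatrixPower

variable {d : ℕ} (A : Matrix (Fin d) (Fin d) ℝ)

theorem mpow_one : mpow A 1 = 1 := by
  simp [mpow]

theorem mpow_mul {a b : ℝ} (ha : 0 < a) (hb : 0 < b) :
    mpow A a * mpow A b = mpow A (a * b) := by
  rw [mpow, mpow, mpow, Real.log_mul ha.ne' hb.ne', add_smul]
  exact (Matrix.exp_add_of_commute _ _ (((Commute.refl A).smul_left _).smul_right _)).symm

theorem mpow_inv_mul_mpow {t : ℝ} (ht : 0 < t) : mpow A t⁻¹ * mpow A t = 1 := by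
  rw [mpow_mul A (inv_pos.2 ht) ht, inv_mul_cancel₀ ht.ne', mpow_one]

theorem mpow_neg (t : ℝ) : mpow (-A) t = mpow A t⁻¹ := by
  rw [mpow, mpow, Real.log_inv, smul_neg, neg_smul]

theorem commute_mpow (t : ℝ) : Commute A (mpow A t) :=
  ((Commute.refl A).smul_right _).exp_right

theorem hasDerivAt_exp_smul_apply (s : ℝ) (i j : Fin d) :
    HasDerivAt (fun u : ℝ => NormedSpace.exp (u • A) i j)
      ((NormedSpace.exp (s • A) * A) i j) s := by
  let : NormedRing (Matrix (Fin d) (Fin d) ℝ) := Matrix.linftyOpNormedRing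
  let : NormedAlgebra ℝ (Matrix (Fin d) (Fin d) ℝ) := Matrix.linftyOpNormedAlgebra
  exact (Matrix.entryLinearMap ℝ ℝ i j).toContinuousLinearMap.hasFDerivAt.comp_hasDerivAt s
    (hasDerivAt_exp_smul_const A s)

end MatrixPower

theorem ContinuousOn.matrix_vecMul {X m n : Type*} [TopologicalSpace X] [Fintype m]
    {f : X → m → ℝ} {g : X → Matrix m n ℝ} {s : Set X}
    (hf : ContinuousOn f s) (hg : ContinuousOn g s) : ContinuousOn (fun x => f x ᵥ* g x) s :=
  (continuous_fst.matrix_vecMul continuous_snd).comp_continuousOn (hf.prodMk hg)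

section FundamentalTheorem

variable {E : Type*} [NormedAddCommGroup E] {f : ℝ → E} {t : ℝ}

theorem uIcc_one_subset_Ioi (ht : 0 < t) : uIcc 1 t ⊆ Ioi 0 :=
  fun _ hx => (lt_min one_pos ht).trans_le hx.1

theorem ContinuousOn.intervalIntegrable_one (hf : ContinuousOn f (Ioi 0)) (ht : 0 < t) :
    IntervalIntegrable f volume 1 t :=
  (hf.mono (uIcc_one_subset_Ioi ht)).intervalIntegrable

theorem ContinuousOn.hasDerivAt_integral_one [NormedSpace ℝ E] [CompleteSpace E]
    (hf : ContinuousOn f (Ioi 0)) (ht : 0 < t) :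
    HasDerivAt (fun u => ∫ x in (1 : ℝ)..u, f x) (f t) t :=
  intervalIntegral.integral_hasDerivAt_right (hf.intervalIntegrable_one ht)
    (hf.stronglyMeasurableAtFilter isOpen_Ioi t ht) (hf.continuousAt (isOpen_Ioi.mem_nhds ht))

end FundamentalTheorem

section Equ2

attribute [local instance] Matrix.normedAddCommGroup Matrix.normedSpace

variable {d : ℕ} (A : Matrix (Fin d) (Fin d) ℝ) {w : ℝ → Fin d → ℝ}

theorem hasDerivAt_mpow {t : ℝ} (ht : 0 < t) :
    HasDerivAt (mpow A) (t⁻¹ • (mpow A t * A)) t := by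
  refine hasDerivAt_pi.2 fun i => hasDerivAt_pi.2 fun j => ?_
  simpa [mpow, mul_comm, Function.comp_def] using
    (hasDerivAt_exp_smul_apply A (Real.log t) i j).comp t (Real.hasDerivAt_log ht.ne')

theorem HasDerivAt.vecMul {c : ℝ → Fin d → ℝ} {c' : Fin d → ℝ}
    {m : ℝ → Matrix (Fin d) (Fin d) ℝ} {m' : Matrix (Fin d) (Fin d) ℝ} {t : ℝ}
    (hc : HasDerivAt c c' t) (hm : HasDerivAt m m' t) :
    HasDerivAt (fun u => c u ᵥ* m u) (c' ᵥ* m t + c t ᵥ* m') t := by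
  refine hasDerivAt_pi.2 fun j => ?_
  simp only [Matrix.vecMul, dotProduct, Pi.add_apply, ← Finset.sum_add_distrib]
  exact HasDerivAt.fun_sum fun i _ =>
    (hasDerivAt_pi.1 hc i).mul (hasDerivAt_pi.1 (hasDerivAt_pi.1 hm i) j)

theorem continuousOn_mpow : ContinuousOn (mpow A) (Ioi 0) :=
  fun _ ht => (hasDerivAt_mpow A ht).continuousAt.continuousWithinAt

theorem continuousOn_inv_smul_vecMul {D : ℝ → Fin d → ℝ} (hD : ContinuousOn D (Ioi 0)) :
    ContinuousOn (fun x => x⁻¹ • (D x ᵥ* A)) (Ioi 0) :=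
  (continuousOn_inv₀.mono fun _ hx => ne_of_gt hx).smul (hD.matrix_vecMul continuousOn_const)

/-- The paper's `Ŝ`, with a general matrix `A` in place of `H̃`. -/
def Shat (w : ℝ → Fin d → ℝ) (t : ℝ) : Fin d → ℝ :=
  (∫ x in (1 : ℝ)..t, (w x ᵥ* (x⁻¹ • A)) ᵥ* mpow A (t / x)) + w t - w 1 ᵥ* mpow A t

theorem continuousOn_vecMul_mpow_inv (hw : ContinuousOn w (Ioi 0)) :
    ContinuousOn (fun x => (w x ᵥ* (x⁻¹ • A)) ᵥ* mpow A x⁻¹) (Ioi 0) := by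
  have hinv : ContinuousOn (fun x : ℝ => x⁻¹) (Ioi 0) :=
    continuousOn_inv₀.mono fun _ hx => ne_of_gt hx
  exact (hw.matrix_vecMul (hinv.smul continuousOn_const)).matrix_vecMul
    ((continuousOn_mpow A).comp hinv fun _ hx => inv_pos.2 (mem_Ioi.1 hx))

theorem Shat_eq_vecMul_mpow_add (hw : ContinuousOn w (Ioi 0)) {t : ℝ} (ht : 0 < t) :
    Shat A w t =
      ((∫ x in (1 : ℝ)..t, (w x ᵥ* (x⁻¹ • A)) ᵥ* mpow A x⁻¹) - w 1) ᵥ* mpow A t + w t := by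
  have hpull : (∫ x in (1 : ℝ)..t, (w x ᵥ* (x⁻¹ • A)) ᵥ* mpow A (t / x)) =
      (∫ x in (1 : ℝ)..t, (w x ᵥ* (x⁻¹ • A)) ᵥ* mpow A x⁻¹) ᵥ* mpow A t := by
    refine (intervalIntegral.integral_congr fun x hx => ?_).trans
      ((mpow A t).vecMulLinear.toContinuousLinearMap.intervalIntegral_comp_comm
        ((continuousOn_vecMul_mpow_inv A hw).intervalIntegrable_one ht))
    have hx : 0 < x := uIcc_one_subset_Ioi ht hx
    change _ = ((w x ᵥ* (x⁻¹ • A)) ᵥ* mpow A x⁻¹) ᵥ* mpow A t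
    rw [Matrix.vecMul_vecMul (w x ᵥ* _), mpow_mul A (inv_pos.2 hx) ht, div_eq_inv_mul]
  rw [Shat, hpull, Matrix.sub_vecMul]
  abel

theorem hasDerivAt_Shat_sub (hw : ContinuousOn w (Ioi 0)) {t : ℝ} (ht : 0 < t) :
    HasDerivAt
      (fun u => ((∫ x in (1 : ℝ)..u, (w x ᵥ* (x⁻¹ • A)) ᵥ* mpow A x⁻¹) - w 1) ᵥ* mpow A u)
      (t⁻¹ • (Shat A w t ᵥ* A)) t := by
  convert (((continuousOn_vecMul_mpow_inv A hw).hasDerivAt_integral_one ht).sub_const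
    (w 1)).vecMul (hasDerivAt_mpow A ht) using 1
  rw [Shat_eq_vecMul_mpow_add A hw ht, Matrix.vecMul_vecMul, mpow_inv_mul_mpow A ht,
    Matrix.vecMul_one, Matrix.add_vecMul, smul_add, Matrix.vecMul_smul, Matrix.vecMul_smul,
    Matrix.vecMul_vecMul]
  abel

theorem continuousOn_Shat (hw : ContinuousOn w (Ioi 0)) : ContinuousOn (Shat A w) (Ioi 0) :=
  fun t ht => ((hasDerivAt_Shat_sub A hw ht).continuousAt.continuousWithinAt.add (hw t ht)).congr
    (fun _ hu => Shat_eq_vecMul_mpow_add A hw hu) (Shat_eq_vecMul_mpow_add A hw ht)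

theorem Shat_one : Shat A w 1 = 0 := by
  simp [Shat, mpow_one]

theorem Shat_eq_integral (hw : ContinuousOn w (Ioi 0)) {t : ℝ} (ht : 0 < t) :
    Shat A w t = w t - w 1 + ∫ x in (1 : ℝ)..t, x⁻¹ • (Shat A w x ᵥ* A) := by
  rw [intervalIntegral.integral_eq_sub_of_hasDerivAt
      (fun x hx => hasDerivAt_Shat_sub A hw (uIcc_one_subset_Ioi ht hx))
      ((continuousOn_inv_smul_vecMul A (continuousOn_Shat A hw)).intervalIntegrable_one ht),
    Shat_eq_vecMul_mpow_add A hw ht]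
  simp only [intervalIntegral.integral_same, zero_sub, mpow_one, Matrix.vecMul_one]
  abel

/-- Integrating factor: `D(t) t^{-A}` has derivative zero. -/
theorem eq_zero_of_eq_integral {D : ℝ → Fin d → ℝ} (hD : ContinuousOn D (Ioi 0))
    (hDeq : ∀ t, 0 < t → D t = ∫ x in (1 : ℝ)..t, x⁻¹ • (D x ᵥ* A)) {t : ℝ} (ht : 0 < t) :
    D t = 0 := by
  have hD' : ∀ u, 0 < u → HasDerivAt D (u⁻¹ • (D u ᵥ* A)) u := fun u hu =>
    ((continuousOn_inv_smul_vecMul A hD).hasDerivAt_integral_one hu).congr_of_eventuallyEq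
      (eventually_of_mem (isOpen_Ioi.mem_nhds hu) hDeq)
  have hderiv : ∀ u, 0 < u → HasDerivAt (fun r => D r ᵥ* mpow (-A) r) 0 u := by
    intro u hu
    convert (hD' u hu).vecMul (hasDerivAt_mpow (-A) hu) using 1
    rw [Matrix.smul_vecMul, Matrix.vecMul_smul, Matrix.vecMul_vecMul, ← (commute_mpow (-A) u).eq,
      Matrix.neg_mul, Matrix.vecMul_neg, smul_neg, add_neg_cancel]
  have hconst : D t ᵥ* mpow (-A) t = D 1 ᵥ* mpow (-A) 1 :=
    isOpen_Ioi.is_const_of_deriv_eq_zero (convex_Ioi 0).isPreconnected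
      (fun u hu => (hderiv u hu).differentiableAt.differentiableWithinAt)
      (fun u hu => (hderiv u hu).deriv) ht (mem_Ioi.2 one_pos)
  have hD1 : D 1 = 0 := by simpa using hDeq 1 one_pos
  rw [hD1, Matrix.zero_vecMul, mpow_neg] at hconst
  simpa [Matrix.vecMul_vecMul, mpow_inv_mul_mpow A ht] using congrArg (· ᵥ* mpow A t) hconst

theorem eq_Shat_of_eq_integral (hw : ContinuousOn w (Ioi 0)) {Z : ℝ → Fin d → ℝ}
    (hZ : ContinuousOn Z (Ioi 0))
    (hZeq : ∀ t, 0 < t → Z t = w t - w 1 + ∫ x in (1 : ℝ)..t, x⁻¹ • (Z x ᵥ* A)) {t : ℝ}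
    (ht : 0 < t) : Z t = Shat A w t := by
  refine sub_eq_zero.1 (eq_zero_of_eq_integral A (hZ.sub (continuousOn_Shat A hw))
    (fun u hu => ?_) ht)
  simp only [Pi.sub_apply]
  rw [hZeq u hu, Shat_eq_integral A hw hu, add_sub_add_left_eq_sub,
    ← intervalIntegral.integral_sub
    ((continuousOn_inv_smul_vecMul A hZ).intervalIntegrable_one hu)
    ((continuousOn_inv_smul_vecMul A (continuousOn_Shat A hw)).intervalIntegrable_one hu)]
  simp only [Matrix.sub_vecMul, smul_sub]

end Equ2

theorem equ2_solution_general
    {d : ℕ}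
    (H : Matrix (Fin d) (Fin d) ℝ) (v : Fin d → ℝ)
    (w : ℝ → Fin d → ℝ)
    (hw_cont : ContinuousOn w (Ioi (0 : ℝ))) :
    ∃ S : ℝ → Fin d → ℝ,
      -- `Ŝ(t) := ∫₁ᵗ w(x)(H̃/x)(t/x)^{H̃} dx + w(t) − w(1) t^{H̃}`
      S = (fun t =>
        (∫ x in (1 : ℝ)..t,
            (w x ᵥ* (x⁻¹ • Htilde H v)) ᵥ* mpow (Htilde H v) (t / x))
          + w t - w 1 ᵥ* mpow (Htilde H v) t) ∧
      -- `Ŝ` is continuous on `(0, ∞)` and `Ŝ(1) = 0`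
      ContinuousOn S (Ioi (0 : ℝ)) ∧ S 1 = 0 ∧
      -- `Ŝ` solves (Equ2): `Ŝ(t) = w(t) − w(1) + ∫₁ᵗ Ŝ(x)H̃/x dx` for all `t > 0`
      (∀ t : ℝ, 0 < t →
        S t = w t - w 1 + ∫ x in (1 : ℝ)..t, x⁻¹ • (S x ᵥ* Htilde H v)) ∧
      -- uniqueness among continuous solutions
      (∀ Z : ℝ → Fin d → ℝ, ContinuousOn Z (Ioi (0 : ℝ)) →
        (∀ t : ℝ, 0 < t →
          Z t = w t - w 1 + ∫ x in (1 : ℝ)..t, x⁻¹ • (Z x ᵥ* Htilde H v)) →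
        ∀ t : ℝ, 0 < t → Z t = S t) :=
  ⟨Shat (Htilde H v) w, rfl, continuousOn_Shat _ hw_cont, Shat_one _,
    fun _ ht => Shat_eq_integral _ hw_cont ht,
    fun _ hZ hZeq _ ht => eq_Shat_of_eq_integral _ hw_cont hZ hZeq ht⟩

/-- Proposition 3.2 of Zhang–Hu, deterministic form: for a
continuous `w` on `(0,∞)`, the function
`Ŝ(t) = ∫₁ᵗ w(x)(H̃/x)(t/x)^{H̃} dx + w(t) − w(1) t^{H̃}` is the unique continuous
solution of equation (Equ2). -/
theorem equ2_solution
    {d : ℕ} (hd : 0 < d)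
    (H : Matrix (Fin d) (Fin d) ℝ) (v : Fin d → ℝ)
    (hH_offdiag : ∀ q k, q ≠ k → 0 ≤ H q k)
    (hH_rowsum : ∀ q, ∑ k, H q k = 1)
    (hv_eig : v ᵥ* H = v) (hv_sum : ∑ i, v i = 1)
    (w : ℝ → Fin d → ℝ)
    (hw_cont : ContinuousOn w (Ioi (0 : ℝ))) :
    ∃ S : ℝ → Fin d → ℝ,
      -- `Ŝ(t) := ∫₁ᵗ w(x)(H̃/x)(t/x)^{H̃} dx + w(t) − w(1) t^{H̃}`
      S = (fun t =>
        (∫ x in (1 : ℝ)..t,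
            (w x ᵥ* (x⁻¹ • Htilde H v)) ᵥ* mpow (Htilde H v) (t / x))
          + w t - w 1 ᵥ* mpow (Htilde H v) t) ∧
      -- `Ŝ` is continuous on `(0, ∞)` and `Ŝ(1) = 0`
      ContinuousOn S (Ioi (0 : ℝ)) ∧ S 1 = 0 ∧
      -- `Ŝ` solves (Equ2): `Ŝ(t) = w(t) − w(1) + ∫₁ᵗ Ŝ(x)H̃/x dx` for all `t > 0`
      (∀ t : ℝ, 0 < t →
        S t = w t - w 1 + ∫ x in (1 : ℝ)..t, x⁻¹ • (S x ᵥ* Htilde H v)) ∧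
      -- uniqueness among continuous solutions
      (∀ Z : ℝ → Fin d → ℝ, ContinuousOn Z (Ioi (0 : ℝ)) →
        (∀ t : ℝ, 0 < t →
          Z t = w t - w 1 + ∫ x in (1 : ℝ)..t, x⁻¹ • (Z x ᵥ* Htilde H v)) →
        ∀ t : ℝ, 0 < t → Z t = S t) :=
  equ2_solution_general H v w hw_cont
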